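/- arXiv:2009.01578 — 3 statements merged into one kernel-verified Lean document; each statement's English description precedes it below -/
import Mathlib

section
/- For every nonnegative integer k and every c > 0, the integral ∫₀^{2π} |cos θ|^k e^{-c(cos²θ) t} dθ is bounded above by a constant (depending on k and c) times t^{-(1+k)/2} for all t ≥ 1. -/
/-!
The integrand is `F (cos θ)` for an even `F`, hence `π`-periodic, and a shift by `π/2` turns the
integral into twice the integral of `F (sin u)` over `|u| ≤ π/2`. There Jordan's inequality
`2|u|/π ≤ |sin u| ≤ |u|` dominates `|sin u|^k e^{-ct sin²u}` by the Gaussian moment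
`|u|^k e^{-ct(2/π)²u²}`, whose integral over `ℝ` is `Γ((k+1)/2) (ct(2/π)²)^{-(k+1)/2}`.
-/

open Real MeasureTheory intervalIntegral

lemma integral_abs_pow_mul_exp_neg_mul_sq (k : ℕ) {b : ℝ} (hb : 0 < b) :
    ∫ x : ℝ, |x| ^ k * exp (-b * x ^ 2) = Gamma ((k + 1) / 2) * b ^ (-(1 + (k : ℝ)) / 2) := by
  have hk : (-1 : ℝ) < k := by linarith [k.cast_nonneg (α := ℝ)]
  have hsym := integral_comp_abs (f := fun x : ℝ => x ^ k * exp (-b * x ^ 2))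
  simp only [sq_abs] at hsym
  rw [hsym]
  calc 2 * ∫ x in Set.Ioi (0 : ℝ), x ^ k * exp (-b * x ^ 2)
      = 2 * ∫ x in Set.Ioi (0 : ℝ), x ^ (k : ℝ) * exp (-b * x ^ (2 : ℝ)) := by
        congr 1
        refine setIntegral_congr_fun measurableSet_Ioi fun x _ => ?_
        norm_cast
    _ = _ := by
        rw [integral_rpow_mul_exp_neg_mul_rpow two_pos hk hb, add_comm (1 : ℝ)]
        ring

lemma integrable_abs_pow_mul_exp_neg_mul_sq (k : ℕ) {b : ℝ} (hb : 0 < b) :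
    Integrable fun x : ℝ => |x| ^ k * exp (-b * x ^ 2) := by
  have hk : (-1 : ℝ) < k := by linarith [k.cast_nonneg (α := ℝ)]
  simpa [abs_mul, abs_of_nonneg (exp_nonneg _)] using
    (integrable_rpow_mul_exp_neg_mul_sq hb hk).abs

lemma periodic_comp_cos_of_even {F : ℝ → ℝ} (hF : ∀ x, F (-x) = F x) :
    Function.Periodic (fun θ => F (cos θ)) π := fun θ => by
  simp only [cos_add_pi, hF]

lemma integral_comp_cos_eq_two_mul_integral_comp_sin {F : ℝ → ℝ} (hF : Continuous F)
    (heven : ∀ x, F (-x) = F x) :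
    ∫ θ in (0 : ℝ)..2 * π, F (cos θ) = 2 * ∫ u in -(π / 2)..π / 2, F (sin u) := by
  have h := (periodic_comp_cos_of_even heven).intervalIntegral_add_zsmul_eq 2 0
    fun _ _ => (hF.comp continuous_cos).intervalIntegrable _ _
  simp only [zero_add, zsmul_eq_mul, Int.cast_ofNat] at h
  have hshift := integral_comp_add_right (fun θ => F (cos θ)) (a := -(π / 2)) (b := π / 2) (π / 2)
  simp only [cos_add_pi_div_two, heven, neg_add_cancel, add_halves] at hshift
  rw [h, hshift]

lemma abs_sin_pow_mul_exp_le (k : ℕ) {s u : ℝ} (hs : 0 ≤ s) (hu : |u| ≤ π / 2) :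
    |sin u| ^ k * exp (-s * sin u ^ 2) ≤ |u| ^ k * exp (-(s * (2 / π) ^ 2) * u ^ 2) := by
  have hjordan : (2 / π) ^ 2 * u ^ 2 ≤ sin u ^ 2 := calc
    _ = (2 / π * |u|) ^ 2 := by rw [mul_pow, sq_abs]
    _ ≤ |sin u| ^ 2 := pow_le_pow_left₀ (by positivity) (mul_abs_le_abs_sin hu) 2
    _ = sin u ^ 2 := sq_abs _
  refine mul_le_mul (pow_le_pow_left₀ (abs_nonneg _) abs_sin_le_abs k)
    (exp_le_exp.2 ?_) (by positivity) (by positivity)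
  nlinarith

lemma integral_abs_sin_pow_mul_exp_le (k : ℕ) {s : ℝ} (hs : 0 < s) :
    ∫ u in -(π / 2)..π / 2, |sin u| ^ k * exp (-s * sin u ^ 2) ≤
      Gamma ((k + 1) / 2) * (s * (2 / π) ^ 2) ^ (-(1 + (k : ℝ)) / 2) := by
  have hb : 0 < s * (2 / π) ^ 2 := by positivity
  have hπ : -(π / 2) ≤ π / 2 := by linarith [pi_pos]
  rw [← integral_abs_pow_mul_exp_neg_mul_sq k hb]
  calc _ ≤ ∫ u in -(π / 2)..π / 2, |u| ^ k * exp (-(s * (2 / π) ^ 2) * u ^ 2) :=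
        integral_mono_on hπ (Continuous.intervalIntegrable (by fun_prop) _ _)
          (integrable_abs_pow_mul_exp_neg_mul_sq k hb).intervalIntegrable
          fun u hu => abs_sin_pow_mul_exp_le k hs.le (abs_le.2 hu)
    _ ≤ _ := by
        rw [integral_of_le hπ]
        exact setIntegral_le_integral (integrable_abs_pow_mul_exp_neg_mul_sq k hb)
          (.of_forall fun u => by positivity)

/-- For every `k : ℕ` and `c > 0`, there is a constant `C > 0`
(depending on `k` and `c`) with
`∫₀^{2π} |cos θ|^k e^{-c(cos²θ)t} dθ ≤ C t^{-(1+k)/2}` for all `t ≥ 1`. -/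
theorem stmt3 (k : ℕ) (c : ℝ) (hc : 0 < c) :
    ∃ C : ℝ, 0 < C ∧ ∀ t : ℝ, 1 ≤ t →
      (∫ θ in (0:ℝ)..(2 * π), |cos θ| ^ k * exp (-c * (cos θ ^ 2) * t)) ≤
        C * t ^ (-(1 + (k : ℝ)) / 2) := by
  refine ⟨2 * Gamma ((k + 1) / 2) * (c * (2 / π) ^ 2) ^ (-(1 + (k : ℝ)) / 2), by positivity,
    fun t ht => ?_⟩
  have hct : 0 < c * t := by positivity
  have hF : Continuous fun x : ℝ => |x| ^ k * exp (-(c * t) * x ^ 2) := by fun_prop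
  calc (∫ θ in (0:ℝ)..(2 * π), |cos θ| ^ k * exp (-c * (cos θ ^ 2) * t))
      = 2 * ∫ u in -(π / 2)..π / 2, |sin u| ^ k * exp (-(c * t) * sin u ^ 2) := by
        rw [← integral_comp_cos_eq_two_mul_integral_comp_sin hF (fun x => by simp)]
        congr 1 with θ
        ring_nf
    _ ≤ 2 * (Gamma ((k + 1) / 2) * (c * t * (2 / π) ^ 2) ^ (-(1 + (k : ℝ)) / 2)) := by
        gcongr
        exact integral_abs_sin_pow_mul_exp_le k hct
    _ = _ := by
        rw [show c * t * (2 / π) ^ 2 = c * (2 / π) ^ 2 * t by ring,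
          mul_rpow (by positivity) (by positivity)]
        ring
end

section
/- Let 0 ≤ γ < 1, 0 ≤ κ < 1, and set φ := min{γ, κ, γ+κ−1}. Then there exists a constant C > 0 such that for all t ≥ 2, ∫₀^t min{1, (t−τ)^{−γ}} · min{1, τ^{−κ}} dτ ≤ C t^{−φ}. -/
open Real MeasureTheory intervalIntegral

/-! Split `[0, t]` at `t / 2`. On the half where `τ ≤ t / 2` the first factor is at most
`(t / 2) ^ (-γ)` and the second at most `τ ^ (-κ)`; symmetrically on the other half.
Since `∫₀ᵗ τ ^ (-κ) dτ = t ^ (1 - κ) / (1 - κ)`, the integral is `O(t ^ (1 - γ - κ))`,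
and `1 - γ - κ = -min γ (min κ (γ + κ - 1))` because `γ, κ < 1`. -/

lemma min_one_rpow_nonneg {x : ℝ} (hx : 0 ≤ x) (c : ℝ) : 0 ≤ min 1 (x ^ c) :=
  le_min zero_le_one (rpow_nonneg hx c)

lemma intervalIntegrable_min_one_rpow_mul_min_one_rpow (a b : ℝ) {t : ℝ} (ht : 0 ≤ t) :
    IntervalIntegrable (fun τ => min 1 ((t - τ) ^ a) * min 1 (τ ^ b)) volume 0 t := by
  refine (intervalIntegrable_const (c := (1 : ℝ))).mono_fun' (by fun_prop) ?_
  rw [Set.uIoc_of_le ht]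
  filter_upwards [ae_restrict_mem measurableSet_Ioc] with τ ⟨hτ0, hτt⟩
  rw [Real.norm_of_nonneg (mul_nonneg (min_one_rpow_nonneg (by linarith) a)
    (min_one_rpow_nonneg hτ0.le b))]
  exact mul_le_one₀ (min_le_left _ _) (min_one_rpow_nonneg hτ0.le b) (min_le_left _ _)

lemma integral_rpow_neg_of_lt_one {c : ℝ} (hc : c < 1) (t : ℝ) :
    ∫ x in (0 : ℝ)..t, x ^ (-c) = t ^ (1 - c) / (1 - c) := by
  rw [integral_rpow (Or.inl (by linarith)), zero_rpow (by linarith), sub_zero,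
    neg_add_eq_sub]

lemma integral_sub_rpow_neg_of_lt_one {c : ℝ} (hc : c < 1) (t : ℝ) :
    ∫ τ in (0 : ℝ)..t, (t - τ) ^ (-c) = t ^ (1 - c) / (1 - c) := by
  rw [integral_comp_sub_left (fun x => x ^ (-c)), sub_self, sub_zero,
    integral_rpow_neg_of_lt_one hc]

lemma min_one_rpow_mul_min_one_rpow_le {a s u γ κ : ℝ} (ha : 0 < a) (has : a ≤ s)
    (hu : 0 ≤ u) (hγ : 0 ≤ γ) :
    min 1 (s ^ (-γ)) * min 1 (u ^ (-κ)) ≤ a ^ (-γ) * u ^ (-κ) :=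
  mul_le_mul ((min_le_right _ _).trans (rpow_le_rpow_of_nonpos ha has (neg_nonpos.2 hγ)))
    (min_le_right _ _) (min_one_rpow_nonneg hu _) (rpow_nonneg ha.le _)

lemma min_one_rpow_mul_min_one_rpow_le_add {γ κ t τ : ℝ} (hγ : 0 ≤ γ) (hκ : 0 ≤ κ)
    (ht : 0 < t) (hτ0 : 0 ≤ τ) (hτt : τ ≤ t) :
    min 1 ((t - τ) ^ (-γ)) * min 1 (τ ^ (-κ)) ≤
      (t / 2) ^ (-κ) * (t - τ) ^ (-γ) + (t / 2) ^ (-γ) * τ ^ (-κ) := by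
  have ht2 : 0 < t / 2 := by linarith
  have hfirst := mul_nonneg (rpow_nonneg ht2.le (-κ)) (rpow_nonneg (sub_nonneg.2 hτt) (-γ))
  have hsecond := mul_nonneg (rpow_nonneg ht2.le (-γ)) (rpow_nonneg hτ0 (-κ))
  rcases le_total τ (t / 2) with h | h
  · calc min 1 ((t - τ) ^ (-γ)) * min 1 (τ ^ (-κ)) ≤ (t / 2) ^ (-γ) * τ ^ (-κ) :=
          min_one_rpow_mul_min_one_rpow_le ht2 (by linarith) hτ0 hγ
      _ ≤ _ := le_add_of_nonneg_left hfirst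
  · calc min 1 ((t - τ) ^ (-γ)) * min 1 (τ ^ (-κ))
          = min 1 (τ ^ (-κ)) * min 1 ((t - τ) ^ (-γ)) := mul_comm _ _
      _ ≤ (t / 2) ^ (-κ) * (t - τ) ^ (-γ) :=
          min_one_rpow_mul_min_one_rpow_le ht2 h (sub_nonneg.2 hτt) hκ
      _ ≤ _ := le_add_of_nonneg_right hsecond

lemma integral_min_one_rpow_mul_min_one_rpow_le {γ κ t : ℝ} (hγ0 : 0 ≤ γ) (hγ1 : γ < 1)
    (hκ0 : 0 ≤ κ) (hκ1 : κ < 1) (ht : 0 < t) :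
    ∫ τ in (0 : ℝ)..t, min 1 ((t - τ) ^ (-γ)) * min 1 (τ ^ (-κ)) ≤
      (2 ^ κ / (1 - γ) + 2 ^ γ / (1 - κ)) * t ^ (1 - γ - κ) := by
  have hsub : IntervalIntegrable (fun τ : ℝ => (t - τ) ^ (-γ)) volume 0 t := by
    have := (intervalIntegrable_rpow' (a := t) (b := 0) (r := -γ) (by linarith)).comp_sub_left
      t
    rwa [sub_self, sub_zero] at this
  have hrpow : IntervalIntegrable (fun τ : ℝ => τ ^ (-κ)) volume 0 t :=
    intervalIntegrable_rpow' (by linarith)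
  have hhalf (c : ℝ) : (t / 2) ^ (-c) = 2 ^ c * t ^ (-c) := by
    rw [div_rpow ht.le zero_le_two, rpow_neg zero_le_two, div_inv_eq_mul, mul_comm]
  have hexp (a b : ℝ) (hab : -a + (1 - b) = 1 - γ - κ) :
      t ^ (-a) * t ^ (1 - b) = t ^ (1 - γ - κ) := by
    rw [← rpow_add ht, hab]
  calc ∫ τ in (0 : ℝ)..t, min 1 ((t - τ) ^ (-γ)) * min 1 (τ ^ (-κ))
      ≤ ∫ τ in (0 : ℝ)..t, (t / 2) ^ (-κ) * (t - τ) ^ (-γ) + (t / 2) ^ (-γ) * τ ^ (-κ) :=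
        integral_mono_on ht.le
          (intervalIntegrable_min_one_rpow_mul_min_one_rpow (-γ) (-κ) ht.le)
          ((hsub.const_mul _).add (hrpow.const_mul _))
          fun τ hτ => min_one_rpow_mul_min_one_rpow_le_add hγ0 hκ0 ht hτ.1 hτ.2
    _ = (t / 2) ^ (-κ) * (t ^ (1 - γ) / (1 - γ)) +
          (t / 2) ^ (-γ) * (t ^ (1 - κ) / (1 - κ)) := by
        rw [integral_add (hsub.const_mul _) (hrpow.const_mul _),
          intervalIntegral.integral_const_mul, intervalIntegral.integral_const_mul,
          integral_sub_rpow_neg_of_lt_one hγ1, integral_rpow_neg_of_lt_one hκ1]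
    _ = (2 ^ κ / (1 - γ) + 2 ^ γ / (1 - κ)) * t ^ (1 - γ - κ) := by
        rw [hhalf, hhalf]
        linear_combination (2 ^ κ / (1 - γ)) * hexp κ γ (by ring) +
          (2 ^ γ / (1 - κ)) * hexp γ κ (by ring)

/-- Bianchini–Hanouzet–Natalini, Lemma 5.2: for `0 ≤ γ, κ < 1` and
`φ = min{γ, κ, γ+κ-1}`, there is `C > 0` with
`∫₀^t min{1,(t-τ)^{-γ}} min{1,τ^{-κ}} dτ ≤ C t^{-φ}` for all `t ≥ 2`. -/
theorem stmt4 (γ κ : ℝ) (hγ0 : 0 ≤ γ) (hγ1 : γ < 1) (hκ0 : 0 ≤ κ) (hκ1 : κ < 1) :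
    ∃ C : ℝ, 0 < C ∧ ∀ t : ℝ, 2 ≤ t →
      (∫ τ in (0:ℝ)..t, min 1 ((t - τ) ^ (-γ)) * min 1 (τ ^ (-κ)))
        ≤ C * t ^ (-(min γ (min κ (γ + κ - 1)))) := by
  have hφ : -(min γ (min κ (γ + κ - 1))) = 1 - γ - κ := by
    rw [min_eq_right (by linarith : γ + κ - 1 ≤ κ),
      min_eq_right (by linarith : γ + κ - 1 ≤ γ)]
    ring
  have h1γ : 0 < 1 - γ := by linarith
  have h1κ : 0 < 1 - κ := by linarith
  refine ⟨2 ^ κ / (1 - γ) + 2 ^ γ / (1 - κ), by positivity, fun t ht => ?_⟩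
  rw [hφ]
  exact integral_min_one_rpow_mul_min_one_rpow_le hγ0 hγ1 hκ0 hκ1 (by linarith)
end

section
/- Let α, N, C > 0, let ν > 0, r ≥ 0, and let b₀, Ω₀ : ℝ² → ℝ have Fourier transforms satisfying |b̂₀(ξ)| ≤ B₀/(1+|ξ|^{1+ν+r}) and |Ω̂₀(ξ)| ≤ W₀/(1+|ξ|^{1+ν+r}). Define b(t) by b̂(t,ξ) = e^{−C(ξ₁²/|ξ|²)t} b̂₀(ξ) + (|ξ₁|/|ξ|) e^{−C(ξ₁²/|ξ|²)t} Ω̂₀(ξ). Then for t ≥ 1, ‖b(t)‖_{H^r} ≲ t^{−1/4} B₀ + t^{−3/4} W₀. -/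
/-!
Pointwise, `(1 + |ξ|²)^r |b̂(t, ξ)|² ≤ w(|ξ|) q(ξ₁/|ξ|)` with `w(ρ) = (1 + ρ²)^r / (1 + ρ^(1+ν+r))²`
and `q(c) = 2 (B₀² + W₀² c²) e^(-2Ctc²)`, so in polar coordinates the integral factors into
`∫ ρ w(ρ) dρ`, which is finite because `ρ w(ρ) ≲ ρ^(-1-2ν)` at infinity, times `∫ q(cos θ) dθ`.
For the angular factor, Jordan's inequality `|cos θ| ≥ (2/π) | |θ| - π/2 |` dominates
`e^(-a cos² θ)` on `(-π, π)` by two Gaussians centred at `±π/2`, whence `≲ a^(-1/2)`, and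
`x e^(-2x) ≤ e^(-x)` turns `cos² θ e^(-a cos² θ)` into the same integral at `a/2`, whence
`≲ a^(-3/2)`. With `a = 2Ct` the squared norm is `≲ t^(-1/2) B₀² + t^(-3/2) W₀²`.
-/

open MeasureTheory Real Set
open scoped FourierTransform ENNReal

theorem lintegral_euclideanSpace_fin_two_radial_mul_angular {f g : ℝ → ℝ≥0∞}
    (hf : Measurable f) (hg : Measurable g) :
    ∫⁻ ξ : EuclideanSpace ℝ (Fin 2), f ‖ξ‖ * g (ξ 0 / ‖ξ‖) =
      (∫⁻ ρ in Ioi 0, ENNReal.ofReal ρ * f ρ) * ∫⁻ θ in Ioo (-π) π, g (cos θ) := by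
  let e := (MeasurableEquiv.toLp 2 (Fin 2 → ℝ)).symm.trans MeasurableEquiv.finTwoArrow
  have he : MeasurePreserving e :=
    (volume_preserving_finTwoArrow ℝ).comp
      (EuclideanSpace.volume_preserving_symm_measurableEquiv_toLp (Fin 2))
  let h : ℝ × ℝ → ℝ≥0∞ := fun p => f √(p.1 ^ 2 + p.2 ^ 2) * g (p.1 / √(p.1 ^ 2 + p.2 ^ 2))
  calc ∫⁻ ξ : EuclideanSpace ℝ (Fin 2), f ‖ξ‖ * g (ξ 0 / ‖ξ‖)
      = ∫⁻ ξ, h (e ξ) := by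
        congr with ξ
        simp [h, e, EuclideanSpace.norm_eq, Fin.sum_univ_two]
    _ = ∫⁻ p, h p := (he.lintegral_map_equiv h e).symm
    _ = ∫⁻ q in Ioi 0 ×ˢ Ioo (-π) π, ENNReal.ofReal q.1 * f q.1 * g (cos q.2) := by
        rw [← lintegral_comp_polarCoord_symm]
        refine setLIntegral_congr_fun polarCoord.open_target.measurableSet fun q hq => ?_
        have hq1 : 0 < q.1 := hq.1
        have hnorm : √((q.1 * cos q.2) ^ 2 + (q.1 * sin q.2) ^ 2) = q.1 := by
          rw [show (q.1 * cos q.2) ^ 2 + (q.1 * sin q.2) ^ 2 = q.1 ^ 2 by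
            linear_combination q.1 ^ 2 * cos_sq_add_sin_sq q.2, sqrt_sq hq1.le]
        simp only [h, polarCoord_symm_apply, hnorm, smul_eq_mul, mul_div_cancel_left₀ _ hq1.ne',
          mul_assoc]
    _ = (∫⁻ ρ in Ioi 0, ENNReal.ofReal ρ * f ρ) * ∫⁻ θ in Ioo (-π) π, g (cos θ) := by
        rw [Measure.volume_eq_prod, ← Measure.prod_restrict]
        exact lintegral_prod_mul (measurable_id.ennreal_ofReal.mul hf).aemeasurable
          (hg.comp continuous_cos.measurable).aemeasurable

theorem lintegral_exp_neg_mul_sq_sub {b : ℝ} (hb : 0 < b) (c : ℝ) :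
    ∫⁻ x, ENNReal.ofReal (exp (-b * (x - c) ^ 2)) = ENNReal.ofReal √(π / b) := by
  rw [lintegral_sub_right_eq_self (fun x => ENNReal.ofReal (exp (-b * x ^ 2))) c,
    ← integral_gaussian, ofReal_integral_eq_lintegral_ofReal (integrable_exp_neg_mul_sq hb)
      (Filter.Eventually.of_forall fun x => (exp_pos _).le)]

theorem sq_abs_sub_pi_div_two_le_cos_sq {θ : ℝ} (hθ : |θ| ≤ π) :
    (2 / π) ^ 2 * (|θ| - π / 2) ^ 2 ≤ cos θ ^ 2 := by
  have hjordan := mul_abs_le_abs_sin (x := π / 2 - |θ|) (by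
    rw [abs_le]; constructor <;> linarith [abs_nonneg θ])
  rw [sin_pi_div_two_sub, cos_abs, abs_sub_comm] at hjordan
  calc (2 / π) ^ 2 * (|θ| - π / 2) ^ 2 = (2 / π * abs (|θ| - π / 2)) ^ 2 := by rw [mul_pow, sq_abs]
    _ ≤ |cos θ| ^ 2 := pow_le_pow_left₀ (by positivity) hjordan 2
    _ = cos θ ^ 2 := sq_abs _

theorem lintegral_exp_neg_mul_cos_sq_le {a : ℝ} (ha : 0 < a) :
    ∫⁻ θ in Ioo (-π) π, ENNReal.ofReal (exp (-(a * cos θ ^ 2)))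
      ≤ ENNReal.ofReal (√(π ^ 3) * a ^ (-(1 / 2 : ℝ))) := by
  set b := (2 / π) ^ 2 * a
  have hb : 0 < b := by positivity
  have hpt : ∀ θ ∈ Ioo (-π) π, ENNReal.ofReal (exp (-(a * cos θ ^ 2))) ≤
      ENNReal.ofReal (exp (-b * (θ - π / 2) ^ 2)) +
        ENNReal.ofReal (exp (-b * (θ - -(π / 2)) ^ 2)) := by
    intro θ hθ
    have hcos : b * (|θ| - π / 2) ^ 2 ≤ a * cos θ ^ 2 := by
      have := sq_abs_sub_pi_div_two_le_cos_sq (abs_le.2 ⟨hθ.1.le, hθ.2.le⟩)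
      simp only [b]; nlinarith
    have hexp : exp (-(a * cos θ ^ 2)) ≤ exp (-b * (|θ| - π / 2) ^ 2) := by
      rw [exp_le_exp]; linarith
    rcases abs_cases θ with ⟨h, -⟩ | ⟨h, -⟩ <;> rw [h] at hexp
    · exact (ENNReal.ofReal_le_ofReal hexp).trans le_self_add
    · refine (ENNReal.ofReal_le_ofReal (hexp.trans_eq ?_)).trans le_add_self
      ring_nf
  have hgauss : √(π / b) + √(π / b) = √(π ^ 3) * a ^ (-(1 / 2 : ℝ)) := by
    rw [rpow_neg ha.le, ← sqrt_eq_rpow, show π / b = π ^ 3 / 2 ^ 2 / a by simp only [b]; field_simp,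
      sqrt_div' _ ha.le, sqrt_div' _ (by positivity), sqrt_sq zero_le_two]
    ring
  calc ∫⁻ θ in Ioo (-π) π, ENNReal.ofReal (exp (-(a * cos θ ^ 2)))
      ≤ ∫⁻ θ in Ioo (-π) π, (ENNReal.ofReal (exp (-b * (θ - π / 2) ^ 2)) +
          ENNReal.ofReal (exp (-b * (θ - -(π / 2)) ^ 2))) :=
        setLIntegral_mono' measurableSet_Ioo hpt
    _ ≤ ∫⁻ θ, (ENNReal.ofReal (exp (-b * (θ - π / 2) ^ 2)) +
          ENNReal.ofReal (exp (-b * (θ - -(π / 2)) ^ 2))) := setLIntegral_le_lintegral _ _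
    _ = ENNReal.ofReal (√(π ^ 3) * a ^ (-(1 / 2 : ℝ))) := by
        rw [lintegral_add_left (by fun_prop), lintegral_exp_neg_mul_sq_sub hb,
          lintegral_exp_neg_mul_sq_sub hb, ← ENNReal.ofReal_add (by positivity) (by positivity),
          hgauss]

theorem mul_exp_neg_two_mul_le (x : ℝ) : x * exp (-(2 * x)) ≤ exp (-x) :=
  calc x * exp (-(2 * x)) ≤ exp x * exp (-(2 * x)) := by
        gcongr; linarith [add_one_le_exp x]
    _ = exp (-x) := by rw [← exp_add]; ring_nf

theorem lintegral_cos_sq_mul_exp_neg_mul_cos_sq_le {a : ℝ} (ha : 0 < a) :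
    ∫⁻ θ in Ioo (-π) π, ENNReal.ofReal (cos θ ^ 2 * exp (-(a * cos θ ^ 2)))
      ≤ ENNReal.ofReal (√(π ^ 3) * (a / 2) ^ (-(3 / 2 : ℝ))) := by
  have ha2 : 0 < a / 2 := by positivity
  calc ∫⁻ θ in Ioo (-π) π, ENNReal.ofReal (cos θ ^ 2 * exp (-(a * cos θ ^ 2)))
      ≤ ∫⁻ θ in Ioo (-π) π,
          ENNReal.ofReal ((a / 2)⁻¹) * ENNReal.ofReal (exp (-(a / 2 * cos θ ^ 2))) := by
        refine lintegral_mono fun θ => ?_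
        rw [← ENNReal.ofReal_mul (by positivity)]
        refine ENNReal.ofReal_le_ofReal ?_
        rw [le_inv_mul_iff₀ ha2]
        have h := mul_exp_neg_two_mul_le (a / 2 * cos θ ^ 2)
        rwa [show 2 * (a / 2 * cos θ ^ 2) = a * cos θ ^ 2 by ring, mul_assoc] at h
    _ ≤ ENNReal.ofReal ((a / 2)⁻¹) * ENNReal.ofReal (√(π ^ 3) * (a / 2) ^ (-(1 / 2 : ℝ))) := by
        rw [lintegral_const_mul _ (by fun_prop)]
        gcongr
        exact lintegral_exp_neg_mul_cos_sq_le ha2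
    _ = ENNReal.ofReal (√(π ^ 3) * (a / 2) ^ (-(3 / 2 : ℝ))) := by
        rw [← ENNReal.ofReal_mul (by positivity), ← rpow_neg_one, mul_left_comm, ← rpow_add ha2]
        norm_num

theorem mul_one_add_sq_rpow_div_le_of_le_one {r ρ : ℝ} (hr : 0 ≤ r) (hρ₀ : 0 ≤ ρ) (hρ₁ : ρ ≤ 1)
    (s : ℝ) :
    ρ * ((1 + ρ ^ 2) ^ r / (1 + ρ ^ s) ^ 2) ≤ 2 ^ r := by
  have hnum : (1 + ρ ^ 2) ^ r ≤ 2 ^ r := rpow_le_rpow (by positivity) (by nlinarith) hr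
  have hden : 1 ≤ (1 + ρ ^ s) ^ 2 := one_le_pow₀ (le_add_of_nonneg_right (rpow_nonneg hρ₀ s))
  calc ρ * ((1 + ρ ^ 2) ^ r / (1 + ρ ^ s) ^ 2) ≤ 1 * ((1 + ρ ^ 2) ^ r / 1) := by gcongr
    _ ≤ 2 ^ r := by rwa [one_mul, div_one]

theorem mul_one_add_sq_rpow_div_le_of_one_lt {ν r ρ : ℝ} (hr : 0 ≤ r) (hρ : 1 < ρ) :
    ρ * ((1 + ρ ^ 2) ^ r / (1 + ρ ^ (1 + ν + r)) ^ 2) ≤ 2 ^ r * ρ ^ (-(1 + 2 * ν)) := by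
  have hρ₀ : 0 < ρ := zero_lt_one.trans hρ
  have hnum : (1 + ρ ^ 2) ^ r ≤ 2 ^ r * ρ ^ (2 * r) := by
    rw [rpow_mul hρ₀.le, rpow_two, ← mul_rpow zero_le_two (by positivity)]
    exact rpow_le_rpow (by positivity) (by nlinarith) hr
  have hden : ρ ^ (2 * (1 + ν + r)) ≤ (1 + ρ ^ (1 + ν + r)) ^ 2 := by
    rw [mul_comm, rpow_mul hρ₀.le, rpow_two]
    gcongr
    linarith
  calc ρ * ((1 + ρ ^ 2) ^ r / (1 + ρ ^ (1 + ν + r)) ^ 2)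
      ≤ ρ * (2 ^ r * ρ ^ (2 * r) / ρ ^ (2 * (1 + ν + r))) := by gcongr
    _ = 2 ^ r * ρ ^ (-(1 + 2 * ν)) := by
        rw [show -(1 + 2 * ν) = 1 + 2 * r - 2 * (1 + ν + r) by ring, rpow_sub hρ₀, rpow_add hρ₀,
          rpow_one]
        ring

theorem lintegral_Ioi_one_rpow_of_lt {a : ℝ} (ha : a < -1) :
    ∫⁻ ρ in Ioi 1, ENNReal.ofReal (ρ ^ a) = ENNReal.ofReal (-1 / (a + 1)) := by
  rw [← ofReal_integral_eq_lintegral_ofReal (integrableOn_Ioi_rpow_of_lt ha zero_lt_one)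
    ((ae_restrict_mem measurableSet_Ioi).mono fun ρ (hρ : 1 < ρ) => by positivity),
    integral_Ioi_rpow_of_lt ha zero_lt_one, one_rpow]

theorem lintegral_radial_weight_le {ν r : ℝ} (hν : 0 < ν) (hr : 0 ≤ r) :
    ∫⁻ ρ in Ioi 0, ENNReal.ofReal ρ * ENNReal.ofReal ((1 + ρ ^ 2) ^ r / (1 + ρ ^ (1 + ν + r)) ^ 2)
      ≤ ENNReal.ofReal (2 ^ r * (1 + 1 / (2 * ν))) := by
  have hw (ρ : ℝ) : 0 ≤ (1 + ρ ^ 2) ^ r / (1 + ρ ^ (1 + ν + r)) ^ 2 := by positivity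
  simp_rw [← ENNReal.ofReal_mul' (hw _)]
  rw [← Ioc_union_Ioi_eq_Ioi zero_le_one]
  calc _ ≤ _ + _ := lintegral_union_le _ _ _
    _ ≤ (∫⁻ _ in Ioc (0 : ℝ) 1, ENNReal.ofReal (2 ^ r)) +
          ∫⁻ ρ in Ioi (1 : ℝ), ENNReal.ofReal (2 ^ r) * ENNReal.ofReal (ρ ^ (-(1 + 2 * ν))) := by
        refine add_le_add (setLIntegral_mono' measurableSet_Ioc fun ρ hρ => ?_)
          (setLIntegral_mono' measurableSet_Ioi fun ρ hρ => ?_)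
        · exact ENNReal.ofReal_le_ofReal (mul_one_add_sq_rpow_div_le_of_le_one hr hρ.1.le hρ.2 _)
        · rw [← ENNReal.ofReal_mul (by positivity)]
          exact ENNReal.ofReal_le_ofReal (mul_one_add_sq_rpow_div_le_of_one_lt hr hρ)
    _ = ENNReal.ofReal (2 ^ r * (1 + 1 / (2 * ν))) := by
        rw [setLIntegral_const, lintegral_const_mul _ (by fun_prop),
          lintegral_Ioi_one_rpow_of_lt (by linarith), volume_Ioc,
          show -1 / (-(1 + 2 * ν) + 1) = 1 / (2 * ν) by field_simp; ring,
          ← ENNReal.ofReal_mul (by positivity), ← ENNReal.ofReal_mul (by positivity),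
          ← ENNReal.ofReal_add (by positivity) (by positivity)]
        congr 1
        field_simp
        ring

theorem norm_mul_add_mul_mul_sq_le {E s B W : ℝ} {u v : ℂ} (hu : ‖u‖ ≤ B) (hv : ‖v‖ ≤ W) :
    ‖(E : ℂ) * u + (s : ℂ) * E * v‖ ^ 2 ≤ 2 * E ^ 2 * (B ^ 2 + s ^ 2 * W ^ 2) := by
  have hB : 0 ≤ B := (norm_nonneg u).trans hu
  have hW : 0 ≤ W := (norm_nonneg v).trans hv
  have htri : ‖(E : ℂ) * u + (s : ℂ) * E * v‖ ≤ |E| * B + |s| * |E| * W :=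
    calc ‖(E : ℂ) * u + (s : ℂ) * E * v‖ ≤ |E| * ‖u‖ + |s| * |E| * ‖v‖ := by
          simpa only [norm_mul, Complex.norm_real, Real.norm_eq_abs] using
            norm_add_le ((E : ℂ) * u) ((s : ℂ) * E * v)
      _ ≤ |E| * B + |s| * |E| * W := by gcongr
  calc ‖(E : ℂ) * u + (s : ℂ) * E * v‖ ^ 2 ≤ (|E| * B + |s| * |E| * W) ^ 2 := by gcongr
    _ ≤ 2 * E ^ 2 * (B ^ 2 + s ^ 2 * W ^ 2) := by
        rw [← sq_abs E, ← sq_abs s]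
        nlinarith [sq_nonneg (|E| * B - |s| * |E| * W)]

theorem one_add_sq_rpow_mul_norm_sq_le {C t r s B W : ℝ} (ξ : EuclideanSpace ℝ (Fin 2)) {u v : ℂ}
    (hu : ‖u‖ ≤ B / (1 + ‖ξ‖ ^ s)) (hv : ‖v‖ ≤ W / (1 + ‖ξ‖ ^ s)) :
    (1 + ‖ξ‖ ^ 2) ^ r *
        ‖(exp (-C * (ξ 0) ^ 2 / ‖ξ‖ ^ 2 * t) : ℂ) * u +
          ((|ξ 0| / ‖ξ‖ : ℝ) : ℂ) * (exp (-C * (ξ 0) ^ 2 / ‖ξ‖ ^ 2 * t) : ℂ) * v‖ ^ 2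
      ≤ (1 + ‖ξ‖ ^ 2) ^ r / (1 + ‖ξ‖ ^ s) ^ 2 *
          ((2 * B ^ 2 + 2 * W ^ 2 * (ξ 0 / ‖ξ‖) ^ 2) * exp (-(2 * C * t * (ξ 0 / ‖ξ‖) ^ 2))) := by
  have hE : exp (-C * (ξ 0) ^ 2 / ‖ξ‖ ^ 2 * t) ^ 2 = exp (-(2 * C * t * (ξ 0 / ‖ξ‖) ^ 2)) := by
    rw [← exp_nat_mul, div_pow]; ring_nf
  have hs : (|ξ 0| / ‖ξ‖) ^ 2 = (ξ 0 / ‖ξ‖) ^ 2 := by rw [div_pow, div_pow, sq_abs]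
  calc _ ≤ (1 + ‖ξ‖ ^ 2) ^ r * (2 * exp (-C * (ξ 0) ^ 2 / ‖ξ‖ ^ 2 * t) ^ 2 *
        ((B / (1 + ‖ξ‖ ^ s)) ^ 2 + (|ξ 0| / ‖ξ‖) ^ 2 * (W / (1 + ‖ξ‖ ^ s)) ^ 2)) := by
        gcongr
        exact norm_mul_add_mul_mul_sq_le hu hv
    _ = _ := by rw [hE, hs]; generalize 1 + ‖ξ‖ ^ s = D; ring

theorem lintegral_add_mul_cos_sq_mul_exp_le {C t B W : ℝ} (hC : 0 < C) (ht : 0 < t) (hB : 0 ≤ B)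
    (hW : 0 ≤ W) :
    ∫⁻ θ in Ioo (-π) π, ENNReal.ofReal ((B + W * cos θ ^ 2) * exp (-(2 * C * t * cos θ ^ 2)))
      ≤ ENNReal.ofReal (√(π ^ 3) * ((2 * C) ^ (-(1 / 2 : ℝ)) + C ^ (-(3 / 2 : ℝ))) *
          (B * t ^ (-(1 / 2 : ℝ)) + W * t ^ (-(3 / 2 : ℝ)))) := by
  have ha : 0 < 2 * C * t := by positivity
  calc _ = ∫⁻ θ in Ioo (-π) π, (ENNReal.ofReal B * ENNReal.ofReal (exp (-(2 * C * t * cos θ ^ 2))) +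
        ENNReal.ofReal W * ENNReal.ofReal (cos θ ^ 2 * exp (-(2 * C * t * cos θ ^ 2)))) := by
        congr with θ
        rw [add_mul, ENNReal.ofReal_add (by positivity) (by positivity), ENNReal.ofReal_mul hB,
          mul_assoc W, ENNReal.ofReal_mul hW]
    _ = ENNReal.ofReal B * (∫⁻ θ in Ioo (-π) π, ENNReal.ofReal (exp (-(2 * C * t * cos θ ^ 2)))) +
        ENNReal.ofReal W *
          ∫⁻ θ in Ioo (-π) π, ENNReal.ofReal (cos θ ^ 2 * exp (-(2 * C * t * cos θ ^ 2))) := by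
        rw [lintegral_add_left (by fun_prop), lintegral_const_mul _ (by fun_prop),
          lintegral_const_mul _ (by fun_prop)]
    _ ≤ ENNReal.ofReal B * ENNReal.ofReal (√(π ^ 3) * (2 * C * t) ^ (-(1 / 2 : ℝ))) +
        ENNReal.ofReal W * ENNReal.ofReal (√(π ^ 3) * (2 * C * t / 2) ^ (-(3 / 2 : ℝ))) := by
        gcongr
        exacts [lintegral_exp_neg_mul_cos_sq_le ha, lintegral_cos_sq_mul_exp_neg_mul_cos_sq_le ha]
    _ ≤ _ := by
        rw [← ENNReal.ofReal_mul hB, ← ENNReal.ofReal_mul hW,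
          ← ENNReal.ofReal_add (by positivity) (by positivity)]
        refine ENNReal.ofReal_le_ofReal ?_
        rw [show 2 * C * t / 2 = C * t by ring, mul_rpow (by positivity) ht.le,
          mul_rpow hC.le ht.le]
        have h₁ : 0 ≤ (2 * C) ^ (-(1 / 2 : ℝ)) := by positivity
        have h₃ : 0 ≤ C ^ (-(3 / 2 : ℝ)) := by positivity
        have hBt : 0 ≤ B * t ^ (-(1 / 2 : ℝ)) := by positivity
        have hWt : 0 ≤ W * t ^ (-(3 / 2 : ℝ)) := by positivity
        have hπ : 0 ≤ √(π ^ 3) := sqrt_nonneg _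
        nlinarith [mul_nonneg (mul_nonneg hπ h₁) hWt, mul_nonneg (mul_nonneg hπ h₃) hBt]

theorem rpow_half_le_ofReal_add {X : ℝ≥0∞} {a b : ℝ} (hX : X ≤ ENNReal.ofReal (a ^ 2 + b ^ 2))
    (ha : 0 ≤ a) (hb : 0 ≤ b) : X ^ (1 / 2 : ℝ) ≤ ENNReal.ofReal (a + b) :=
  calc X ^ (1 / 2 : ℝ) ≤ ENNReal.ofReal (a ^ 2 + b ^ 2) ^ (1 / 2 : ℝ) := by gcongr
    _ = ENNReal.ofReal √(a ^ 2 + b ^ 2) := by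
        rw [ENNReal.ofReal_rpow_of_nonneg (by positivity) (by norm_num), sqrt_eq_rpow]
    _ ≤ ENNReal.ofReal (a + b) :=
        ENNReal.ofReal_le_ofReal (sqrt_le_iff.2 ⟨by positivity, by nlinarith⟩)

theorem stmt11_general (C : ℝ) (hC : 0 < C)
    (ν r : ℝ) (hν : 0 < ν) (hr : 0 ≤ r)
    (b₀ Ω₀ : EuclideanSpace ℝ (Fin 2) → ℝ) (B₀ W₀ : ℝ)
    (hb₀ : ∀ ξ, ‖𝓕 (fun x => (b₀ x : ℂ)) ξ‖ ≤ B₀ / (1 + ‖ξ‖ ^ (1 + ν + r)))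
    (hΩ₀ : ∀ ξ, ‖𝓕 (fun x => (Ω₀ x : ℂ)) ξ‖ ≤ W₀ / (1 + ‖ξ‖ ^ (1 + ν + r))) :
    ∃ K : ℝ, 0 < K ∧ ∀ t : ℝ, 1 ≤ t →
      (∫⁻ ξ : EuclideanSpace ℝ (Fin 2),
          ENNReal.ofReal ((1 + ‖ξ‖ ^ 2) ^ r *
            ‖(Real.exp (-C * (ξ 0) ^ 2 / ‖ξ‖ ^ 2 * t) : ℂ) * 𝓕 (fun x => (b₀ x : ℂ)) ξ +
              ((|ξ 0| / ‖ξ‖ : ℝ) : ℂ) * (Real.exp (-C * (ξ 0) ^ 2 / ‖ξ‖ ^ 2 * t) : ℂ) *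
                𝓕 (fun x => (Ω₀ x : ℂ)) ξ‖ ^ 2)) ^ ((1:ℝ)/2)
        ≤ ENNReal.ofReal (K * (t ^ (-(1:ℝ)/4) * B₀ + t ^ (-(3:ℝ)/4) * W₀)) := by
  have hs : 0 < 1 + ν + r := by linarith
  have hB₀ : 0 ≤ B₀ := by simpa [hs.ne'] using (norm_nonneg _).trans (hb₀ 0)
  have hW₀ : 0 ≤ W₀ := by simpa [hs.ne'] using (norm_nonneg _).trans (hΩ₀ 0)
  set w : ℝ → ℝ := fun ρ => (1 + ρ ^ 2) ^ r / (1 + ρ ^ (1 + ν + r)) ^ 2 with hw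
  set M := 2 * (2 ^ r * (1 + 1 / (2 * ν))) * √(π ^ 3) *
    ((2 * C) ^ (-(1 / 2 : ℝ)) + C ^ (-(3 / 2 : ℝ)))
  refine ⟨√M, by positivity, fun t ht => ?_⟩
  have ht₀ : 0 < t := by linarith
  set q : ℝ → ℝ := fun c => (2 * B₀ ^ 2 + 2 * W₀ ^ 2 * c ^ 2) * exp (-(2 * C * t * c ^ 2)) with hq
  rw [mul_add, ← mul_assoc, ← mul_assoc]
  refine rpow_half_le_ofReal_add ?_ (by positivity) (by positivity)
  calc _ ≤ ∫⁻ ξ : EuclideanSpace ℝ (Fin 2),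
        ENNReal.ofReal (w ‖ξ‖) * ENNReal.ofReal (q (ξ 0 / ‖ξ‖)) := lintegral_mono fun ξ => by
        rw [← ENNReal.ofReal_mul (by positivity)]
        exact ENNReal.ofReal_le_ofReal (one_add_sq_rpow_mul_norm_sq_le ξ (hb₀ ξ) (hΩ₀ ξ))
    _ = (∫⁻ ρ in Ioi 0, ENNReal.ofReal ρ * ENNReal.ofReal (w ρ)) *
        ∫⁻ θ in Ioo (-π) π, ENNReal.ofReal (q (cos θ)) :=
        lintegral_euclideanSpace_fin_two_radial_mul_angular (f := fun ρ => ENNReal.ofReal (w ρ))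
          (g := fun c => ENNReal.ofReal (q c)) (by rw [hw]; fun_prop) (by rw [hq]; fun_prop)
    _ ≤ ENNReal.ofReal (2 ^ r * (1 + 1 / (2 * ν))) *
        ENNReal.ofReal (√(π ^ 3) * ((2 * C) ^ (-(1 / 2 : ℝ)) + C ^ (-(3 / 2 : ℝ))) *
          (2 * B₀ ^ 2 * t ^ (-(1 / 2 : ℝ)) + 2 * W₀ ^ 2 * t ^ (-(3 / 2 : ℝ)))) := by
        gcongr
        exacts [lintegral_radial_weight_le hν hr,
          lintegral_add_mul_cos_sq_mul_exp_le hC ht₀ (by positivity) (by positivity)]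
    _ = _ := by
        rw [← ENNReal.ofReal_mul (by positivity)]
        congr 1
        simp only [mul_pow, sq_sqrt (by positivity : 0 ≤ M), ← rpow_mul_natCast ht₀.le, M]
        norm_num
        ring

/-- linear decay estimate `‖b(t)‖_{H^r} ≲ t^{-1/4} B₀ + t^{-3/4} W₀`
for `b̂(t,ξ) = e^{-C(ξ₁²/|ξ|²)t} b̂₀(ξ) + (|ξ₁|/|ξ|) e^{-C(ξ₁²/|ξ|²)t} Ω̂₀(ξ)`,
assuming `|b̂₀(ξ)| ≤ B₀/(1+|ξ|^{1+ν+r})` and `|Ω̂₀(ξ)| ≤ W₀/(1+|ξ|^{1+ν+r})`. -/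
theorem stmt11 (α N C : ℝ) (hα : 0 < α) (hN : 0 < N) (hC : 0 < C)
    (ν r : ℝ) (hν : 0 < ν) (hr : 0 ≤ r)
    (b₀ Ω₀ : EuclideanSpace ℝ (Fin 2) → ℝ) (B₀ W₀ : ℝ)
    (hb₀ : ∀ ξ, ‖𝓕 (fun x => (b₀ x : ℂ)) ξ‖ ≤ B₀ / (1 + ‖ξ‖ ^ (1 + ν + r)))
    (hΩ₀ : ∀ ξ, ‖𝓕 (fun x => (Ω₀ x : ℂ)) ξ‖ ≤ W₀ / (1 + ‖ξ‖ ^ (1 + ν + r))) :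
    ∃ K : ℝ, 0 < K ∧ ∀ t : ℝ, 1 ≤ t →
      (∫⁻ ξ : EuclideanSpace ℝ (Fin 2),
          ENNReal.ofReal ((1 + ‖ξ‖ ^ 2) ^ r *
            ‖(Real.exp (-C * (ξ 0) ^ 2 / ‖ξ‖ ^ 2 * t) : ℂ) * 𝓕 (fun x => (b₀ x : ℂ)) ξ +
              ((|ξ 0| / ‖ξ‖ : ℝ) : ℂ) * (Real.exp (-C * (ξ 0) ^ 2 / ‖ξ‖ ^ 2 * t) : ℂ) *
                𝓕 (fun x => (Ω₀ x : ℂ)) ξ‖ ^ 2)) ^ ((1:ℝ)/2)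
        ≤ ENNReal.ofReal (K * (t ^ (-(1:ℝ)/4) * B₀ + t ^ (-(3:ℝ)/4) * W₀)) :=
  stmt11_general C hC ν r hν hr b₀ Ω₀ B₀ W₀ hb₀ hΩ₀
end
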